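/- With q(θ) = exp(2Kr cos θ)/(2π I₀(2Kr)) and u_p(θ) = cos(pθ), the weighted H_{−1,1/q} norm satisfies ‖u_p‖_{−1,1/q} = (√2 π I₀(2Kr))/p · (1 + ρ_p) where |ρ_p| decays faster than any power of 1/p. In particular ‖u_p‖²_{−1,1/q} = (1/p²)·∫_S (1 − cos(2pθ))/(2q(θ)) dθ and ∫_S 1/q = (2π I₀(2Kr))², while ∫_S cos(2pθ)/q(θ) dθ = O(1/√((2p)!)). -/

import Mathlib

/-!
Since `1 / q = 2π I₀(2Kr) · exp (-2Kr cos θ)`, every integral against `1 / q` is an integral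
against `exp (x cos θ)`. The sine integrals vanish by the symmetry `θ ↦ 2π - θ`, and the shift
`θ ↦ θ + π` turns `exp (-x cos θ)` into `exp (x cos θ)`, which gives `∫ 1 / q`. Because
`cos (kθ)` is orthogonal to `cos θ ^ m` for `m < k`, the `k`-th cosine coefficient of
`exp (x cos θ)` only sees the Taylor remainder of order `k`, hence is at most
`2π |x| ^ k e ^ |x| / k! ≤ 2π e ^ (|x| + x² / 2) / √k!`. Finally
`p² ‖u_p‖² = (c² - ∫ cos (2pθ) / q) / 2` with `c = 2π I₀(2Kr)`, so `p ‖u_p‖` differs from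
`c / √2` by a relative error `O(1 / √(2p)!)`, which beats every power of `p`.
-/

open Real MeasureTheory

/-- Modified Bessel function of the first kind of order `j` (integral formula). -/
noncomputable def besselI (j : ℕ) (x : ℝ) : ℝ :=
  (1 / (2 * π)) * ∫ θ in (0:ℝ)..(2 * π), (Real.cos θ) ^ j * Real.exp (x * Real.cos θ)

/-- The stationary density `q(θ) = exp(2Kr cos θ)/(2π I₀(2Kr))`. -/
noncomputable def q (K r θ : ℝ) : ℝ :=
  Real.exp (2 * K * r * Real.cos θ) / (2 * π * besselI 0 (2 * K * r))

open Finset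
open scoped Nat

theorem abs_exp_sub_sum_range_le (x : ℝ) (n : ℕ) :
    |exp x - ∑ m ∈ range n, x ^ m / m !| ≤ |x| ^ n / n ! * exp |x| := by
  have hx : HasSum (fun m ↦ x ^ m / m !) (exp x) := by
    simpa [← Real.exp_eq_exp_ℝ] using NormedSpace.expSeries_div_hasSum_exp x
  have habs : HasSum (fun m ↦ |x| ^ m / m !) (exp |x|) := by
    simpa [← Real.exp_eq_exp_ℝ] using NormedSpace.expSeries_div_hasSum_exp |x|
  rw [← hx.tsum_eq, ← hx.summable.sum_add_tsum_nat_add n, add_sub_cancel_left]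
  refine tsum_of_norm_bounded (f := fun m ↦ x ^ (m + n) / (m + n)!) (habs.mul_left _)
    fun m ↦ ?_
  have hfac : (n ! * m ! : ℝ) ≤ (m + n)! := by
    exact_mod_cast Nat.le_of_dvd (Nat.factorial_pos _)
      (add_comm n m ▸ Nat.factorial_mul_factorial_dvd_factorial_add n m)
  rw [norm_div, norm_pow, Real.norm_eq_abs, RCLike.norm_natCast, pow_add,
    div_mul_div_comm, mul_comm (|x| ^ n)]
  gcongr

theorem integral_cos_nat_mul_eq_zero {k : ℕ} (hk : k ≠ 0) :
    ∫ θ in (0:ℝ)..2 * π, cos (k * θ) = 0 := by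
  have h : (k : ℝ) * (2 * π) = (2 * k : ℕ) * π := by push_cast; ring
  rw [intervalIntegral.integral_comp_mul_left (fun x ↦ cos x) (Nat.cast_ne_zero.2 hk),
    integral_cos, mul_zero, sin_zero, sub_zero, h, sin_nat_mul_pi, smul_zero]

theorem integral_cos_nat_mul_mul_cos_pow_eq_zero {n k : ℕ} (h : n < k) :
    ∫ θ in (0:ℝ)..2 * π, cos (k * θ) * cos θ ^ n = 0 := by
  induction n generalizing k with
  | zero => simpa using integral_cos_nat_mul_eq_zero (by omega)
  | succ n ih =>
    obtain ⟨j, rfl⟩ : ∃ j, k = j + 1 := ⟨k - 1, by omega⟩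
    have product_to_sum : ∀ θ : ℝ, cos ((j + 1 : ℕ) * θ) * cos θ ^ (n + 1)
        = (cos ((j + 2 : ℕ) * θ) * cos θ ^ n + cos (j * θ) * cos θ ^ n) / 2 := by
      intro θ
      push_cast
      rw [show (j + 2 : ℝ) * θ = (j + 1) * θ + θ by ring,
        show (j : ℝ) * θ = (j + 1) * θ - θ by ring, cos_add, cos_sub]
      ring
    simp_rw [product_to_sum]
    rw [intervalIntegral.integral_div,
      intervalIntegral.integral_add (Continuous.intervalIntegrable (by fun_prop) _ _)
        (Continuous.intervalIntegrable (by fun_prop) _ _),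
      ih (by omega), ih (by omega), add_zero, zero_div]

theorem abs_integral_cos_nat_mul_mul_exp_le (x : ℝ) (k : ℕ) :
    |∫ θ in (0:ℝ)..2 * π, cos (k * θ) * exp (x * cos θ)|
      ≤ 2 * π * (|x| ^ k / k ! * exp |x|) := by
  set P : ℝ → ℝ := fun θ ↦ ∑ m ∈ range k, (x * cos θ) ^ m / (m !)
  have hP : ∫ θ in (0:ℝ)..2 * π, cos (k * θ) * P θ = 0 := by
    have hexpand : ∀ θ, cos (k * θ) * P θ
        = ∑ m ∈ range k, x ^ m / m ! * (cos (k * θ) * cos θ ^ m) := by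
      intro θ
      simp_rw [P, mul_sum, mul_pow]
      exact sum_congr rfl fun m _ ↦ by ring
    simp_rw [hexpand]
    rw [intervalIntegral.integral_finsetSum
      fun m _ ↦ Continuous.intervalIntegrable (by fun_prop) _ _]
    exact sum_eq_zero fun m hm ↦ by
      rw [intervalIntegral.integral_const_mul,
        integral_cos_nat_mul_mul_cos_pow_eq_zero (mem_range.1 hm), mul_zero]
  have hremainder :
      ∀ θ, ‖cos (k * θ) * (exp (x * cos θ) - P θ)‖ ≤ |x| ^ k / k ! * exp |x| := by
    intro θ
    have hxθ : |x * cos θ| ≤ |x| := by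
      rw [abs_mul]; exact mul_le_of_le_one_right (abs_nonneg x) (abs_cos_le_one θ)
    rw [Real.norm_eq_abs, abs_mul]
    calc |cos (k * θ)| * |exp (x * cos θ) - P θ|
        ≤ 1 * (|x * cos θ| ^ k / k ! * exp |x * cos θ|) :=
          mul_le_mul (abs_cos_le_one _) (abs_exp_sub_sum_range_le _ k) (abs_nonneg _) zero_le_one
      _ ≤ |x| ^ k / k ! * exp |x| := by
          rw [one_mul]; gcongr
  have hsplit : ∫ θ in (0:ℝ)..2 * π, cos (k * θ) * exp (x * cos θ)
      = ∫ θ in (0:ℝ)..2 * π, cos (k * θ) * (exp (x * cos θ) - P θ) := by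
    simp_rw [mul_sub]
    rw [intervalIntegral.integral_sub (Continuous.intervalIntegrable (by fun_prop) _ _)
      (Continuous.intervalIntegrable (by fun_prop) _ _), hP, sub_zero]
  rw [hsplit, ← Real.norm_eq_abs]
  refine (intervalIntegral.norm_integral_le_of_norm_le_const fun θ _ ↦ hremainder θ).trans_eq ?_
  rw [sub_zero, abs_of_pos two_pi_pos, mul_comm]

theorem abs_pow_le_exp_sq_div_two_mul_sqrt_factorial (x : ℝ) (k : ℕ) :
    |x| ^ k ≤ exp (x ^ 2 / 2) * √(k ! : ℝ) := by
  have h := Real.pow_div_factorial_le_exp (x ^ 2) (sq_nonneg x) k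
  rw [div_le_iff₀ (by positivity)] at h
  rw [← pow_le_pow_iff_left₀ (by positivity) (by positivity) two_ne_zero, mul_pow,
    ← exp_nat_mul, sq_sqrt (by positivity), ← pow_mul, mul_comm k, pow_mul, sq_abs]
  convert h using 3
  push_cast
  ring

theorem abs_integral_cos_nat_mul_mul_exp_le_div_sqrt_factorial (x : ℝ) (k : ℕ) :
    |∫ θ in (0:ℝ)..2 * π, cos (k * θ) * exp (x * cos θ)|
      ≤ 2 * π * exp (|x| + x ^ 2 / 2) / √(k ! : ℝ) := by
  have hpow : |x| ^ k / (k !) ≤ exp (x ^ 2 / 2) / √(k ! : ℝ) := by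
    rw [div_le_div_iff₀ (by positivity) (by positivity)]
    calc |x| ^ k * √(k ! : ℝ) ≤ exp (x ^ 2 / 2) * √(k ! : ℝ) * √(k ! : ℝ) := by
          gcongr; exact abs_pow_le_exp_sq_div_two_mul_sqrt_factorial x k
      _ = exp (x ^ 2 / 2) * (k !) := by rw [mul_assoc, mul_self_sqrt (by positivity)]
  calc _ ≤ 2 * π * (|x| ^ k / (k !) * exp |x|) := abs_integral_cos_nat_mul_mul_exp_le x k
    _ ≤ 2 * π * (exp (x ^ 2 / 2) / √(k ! : ℝ) * exp |x|) := by gcongr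
    _ = 2 * π * exp (|x| + x ^ 2 / 2) / √(k ! : ℝ) := by rw [exp_add]; ring

theorem integral_sin_nat_mul_mul_comp_cos (g : ℝ → ℝ) (p : ℕ) :
    ∫ θ in (0:ℝ)..2 * π, sin (p * θ) * g (cos θ) = 0 := by
  have h := intervalIntegral.integral_comp_sub_left (fun θ ↦ sin (p * θ) * g (cos θ)) (2 * π)
    (a := 0) (b := 2 * π)
  have hodd : ∀ θ,
      sin (p * (2 * π - θ)) * g (cos (2 * π - θ)) = -(sin (p * θ) * g (cos θ)) := fun θ ↦ by
    rw [mul_sub, sin_nat_mul_two_pi_sub, cos_two_pi_sub, neg_mul]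
  simp only [hodd, intervalIntegral.integral_neg, sub_self, sub_zero] at h
  linarith

theorem integral_comp_neg_cos (g : ℝ → ℝ) :
    ∫ θ in (0:ℝ)..2 * π, g (-cos θ) = ∫ θ in (0:ℝ)..2 * π, g (cos θ) := by
  calc ∫ θ in (0:ℝ)..2 * π, g (-cos θ) = ∫ θ in (0:ℝ)..2 * π, g (cos (θ + π)) := by
        simp only [cos_add_pi]
    _ = ∫ θ in π..π + 2 * π, g (cos θ) := by
        rw [intervalIntegral.integral_comp_add_right (fun θ ↦ g (cos θ)), zero_add, add_comm]
    _ = ∫ θ in (0:ℝ)..0 + 2 * π, g (cos θ) :=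
        (cos_periodic.comp g).intervalIntegral_add_eq π 0
    _ = ∫ θ in (0:ℝ)..2 * π, g (cos θ) := by rw [zero_add]

theorem integral_exp_mul_cos (x : ℝ) :
    ∫ θ in (0:ℝ)..2 * π, exp (x * cos θ) = 2 * π * besselI 0 x := by
  simp only [besselI, pow_zero, one_mul]
  field_simp

theorem besselI_zero_pos (x : ℝ) : 0 < besselI 0 x := by
  have hint : 0 < ∫ θ in (0:ℝ)..2 * π, exp (x * cos θ) :=
    intervalIntegral.intervalIntegral_pos_of_pos
      (Continuous.intervalIntegrable (by fun_prop) _ _) (fun θ ↦ exp_pos _) two_pi_pos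
  rw [integral_exp_mul_cos] at hint
  exact pos_of_mul_pos_right hint two_pi_pos.le

theorem integral_sin_div_sq_div (w : ℝ → ℝ) (p : ℝ) :
    ∫ θ in (0:ℝ)..2 * π, (sin (p * θ) / p) ^ 2 / w θ
      = 1 / p ^ 2 * ∫ θ in (0:ℝ)..2 * π, (1 - cos (2 * p * θ)) / (2 * w θ) := by
  rw [← intervalIntegral.integral_const_mul]
  congr 1 with θ
  rw [div_pow, sin_sq_eq_half_sub, mul_assoc]
  ring

theorem pow_le_pow_self_mul_factorial_two_mul (m p : ℕ) : p ^ m ≤ m ^ m * (2 * p)! := by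
  rcases le_or_gt p m with hpm | hmp
  · calc p ^ m ≤ m ^ m := Nat.pow_le_pow_left hpm m
      _ ≤ m ^ m * (2 * p)! := Nat.le_mul_of_pos_right _ (Nat.factorial_pos _)
  · calc p ^ m ≤ (2 * p - m + 1) ^ m := Nat.pow_le_pow_left (by omega) m
      _ ≤ (2 * p - m)! * (2 * p - m + 1) ^ m := Nat.le_mul_of_pos_left _ (Nat.factorial_pos _)
      _ ≤ (2 * p - m + m)! := Nat.factorial_mul_pow_le_factorial
      _ = (2 * p)! := by rw [Nat.sub_add_cancel (by omega)]
      _ ≤ m ^ m * (2 * p)! := Nat.le_mul_of_pos_left _ Nat.pow_self_pos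

theorem exists_pow_le_mul_sqrt_factorial_two_mul (n : ℕ) :
    ∃ C > 0, ∀ p : ℕ, (p : ℝ) ^ n ≤ C * √((2 * p)! : ℝ) := by
  refine ⟨√(((2 * n) ^ (2 * n) : ℕ) : ℝ), sqrt_pos.2 (mod_cast Nat.pow_self_pos), fun p ↦ ?_⟩
  rw [← sqrt_mul (by positivity), ← sqrt_sq (by positivity : (0 : ℝ) ≤ (p : ℝ) ^ n),
    ← pow_mul, mul_comm n]
  apply sqrt_le_sqrt
  exact_mod_cast pow_le_pow_self_mul_factorial_two_mul (2 * n) p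

theorem abs_sqrt_div_sub_one_le {x s : ℝ} (hx : 0 ≤ x) (hs : 0 < s) :
    |√x / s - 1| ≤ |x - s ^ 2| / s ^ 2 := by
  have hdiff : x - s ^ 2 = (√x - s) * (√x + s) := by
    linear_combination -sq_sqrt hx
  rw [div_sub_one hs.ne', abs_div, abs_of_pos hs, div_le_div_iff₀ hs (by positivity), hdiff,
    abs_mul, abs_of_pos (by positivity : 0 < √x + s)]
  calc |√x - s| * s ^ 2 = |√x - s| * s * s := by ring
    _ ≤ |√x - s| * (√x + s) * s := by gcongr; linarith [sqrt_nonneg x]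

theorem exists_sqrt_eq_mul_one_add_of_abs_sub_sq_le {W : ℕ → ℝ} {s C : ℝ} (hs : 0 < s)
    (hC : 0 < C) (hW : ∀ p, 1 ≤ p → 0 ≤ W p)
    (hWs : ∀ p, 1 ≤ p → |W p - s ^ 2| ≤ C / √((2 * p)! : ℝ)) :
    ∃ ρ : ℕ → ℝ, (∀ n : ℕ, ∃ Cn : ℝ, 0 < Cn ∧ ∀ p : ℕ, 1 ≤ p → |ρ p| ≤ Cn / (p : ℝ) ^ n) ∧
      ∀ p : ℕ, 1 ≤ p → √(W p) = s * (1 + ρ p) := by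
  refine ⟨fun p ↦ √(W p) / s - 1, fun n ↦ ?_, fun p _ ↦ by field_simp; ring⟩
  obtain ⟨D, hD, hpow⟩ := exists_pow_le_mul_sqrt_factorial_two_mul n
  refine ⟨C * D / s ^ 2, by positivity, fun p hp ↦ ?_⟩
  have hp0 : (0 : ℝ) < (p : ℝ) ^ n := pow_pos (mod_cast hp) n
  calc |√(W p) / s - 1| ≤ |W p - s ^ 2| / s ^ 2 := abs_sqrt_div_sub_one_le (hW p hp) hs
    _ ≤ C / √((2 * p)! : ℝ) / s ^ 2 := by gcongr; exact hWs p hp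
    _ ≤ C * D / s ^ 2 / (p : ℝ) ^ n := by
        rw [div_div, div_div, div_le_div_iff₀ (by positivity) (by positivity)]
        calc C * (s ^ 2 * (p : ℝ) ^ n) ≤ C * (s ^ 2 * (D * √((2 * p)! : ℝ))) := by
              gcongr; exact hpow p
          _ = C * D * (√((2 * p)! : ℝ) * s ^ 2) := by ring

section StationaryDensity

variable (K r : ℝ)

theorem q_pos (θ : ℝ) : 0 < q K r θ := by
  have := besselI_zero_pos (2 * K * r)
  unfold q; positivity

theorem div_q (θ y : ℝ) :
    y / q K r θ = 2 * π * besselI 0 (2 * K * r) * (y * exp (-(2 * K * r) * cos θ)) := by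
  rw [q, neg_mul, exp_neg]
  field_simp

theorem integral_div_q (f : ℝ → ℝ) :
    ∫ θ in (0:ℝ)..2 * π, f θ / q K r θ
      = 2 * π * besselI 0 (2 * K * r)
          * ∫ θ in (0:ℝ)..2 * π, f θ * exp (-(2 * K * r) * cos θ) := by
  simp_rw [div_q, intervalIntegral.integral_const_mul]

theorem intervalIntegrable_div_q {f : ℝ → ℝ} (hf : Continuous f) :
    IntervalIntegrable (fun θ ↦ f θ / q K r θ) volume 0 (2 * π) := by
  simp_rw [div_q]
  exact Continuous.intervalIntegrable (by fun_prop) _ _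

theorem integral_one_div_q :
    ∫ θ in (0:ℝ)..2 * π, 1 / q K r θ = (2 * π * besselI 0 (2 * K * r)) ^ 2 := by
  rw [integral_div_q]
  simp_rw [one_mul, neg_mul_comm]
  rw [integral_comp_neg_cos (fun t ↦ exp (2 * K * r * t)), integral_exp_mul_cos, sq]

theorem integral_sin_nat_mul_div_q (p : ℕ) :
    ∫ θ in (0:ℝ)..2 * π, sin (p * θ) / q K r θ = 0 := by
  rw [integral_div_q, integral_sin_nat_mul_mul_comp_cos (fun t ↦ exp (-(2 * K * r) * t)),
    mul_zero]

theorem exists_abs_integral_cos_nat_mul_div_q_le :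
    ∃ C > 0, ∀ k : ℕ, |∫ θ in (0:ℝ)..2 * π, cos (k * θ) / q K r θ| ≤ C / √(k ! : ℝ) := by
  have hI := besselI_zero_pos (2 * K * r)
  set x := -(2 * K * r)
  refine ⟨2 * π * besselI 0 (2 * K * r) * (2 * π * exp (|x| + x ^ 2 / 2)), by positivity,
    fun k ↦ ?_⟩
  rw [integral_div_q, abs_mul, abs_of_pos (by positivity), mul_div_assoc]
  gcongr
  exact abs_integral_cos_nat_mul_mul_exp_le_div_sqrt_factorial _ k

theorem integral_one_sub_cos_div_two_q (x : ℝ) :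
    ∫ θ in (0:ℝ)..2 * π, (1 - cos (x * θ)) / (2 * q K r θ)
      = ((2 * π * besselI 0 (2 * K * r)) ^ 2
          - ∫ θ in (0:ℝ)..2 * π, cos (x * θ) / q K r θ) / 2 := by
  have hsplit : ∀ θ, (1 - cos (x * θ)) / (2 * q K r θ)
      = (1 / q K r θ - cos (x * θ) / q K r θ) / 2 := fun θ ↦ by ring
  simp_rw [hsplit]
  rw [intervalIntegral.integral_div, intervalIntegral.integral_sub
    (intervalIntegrable_div_q K r continuous_const) (intervalIntegrable_div_q K r (by fun_prop)),
    integral_one_div_q]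

theorem integral_one_sub_cos_div_two_q_nonneg (x : ℝ) :
    0 ≤ ∫ θ in (0:ℝ)..2 * π, (1 - cos (x * θ)) / (2 * q K r θ) :=
  intervalIntegral.integral_nonneg two_pi_pos.le fun θ _ ↦
    div_nonneg (sub_nonneg.2 (cos_le_one _)) (mul_nonneg zero_le_two (q_pos K r θ).le)

end StationaryDensity

theorem cos_weighted_Hminus1_norm_general (K r : ℝ) :
    (∀ p : ℕ, 1 ≤ p → (∫ θ in (0:ℝ)..(2 * π), Real.sin (p * θ) / q K r θ) = 0) ∧
    (∀ p : ℕ, 1 ≤ p →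
      (∫ θ in (0:ℝ)..(2 * π), (Real.sin (p * θ) / p) ^ 2 / q K r θ)
        = (1 / (p : ℝ) ^ 2)
            * ∫ θ in (0:ℝ)..(2 * π), (1 - Real.cos (2 * p * θ)) / (2 * q K r θ)) ∧
    ((∫ θ in (0:ℝ)..(2 * π), 1 / q K r θ) = (2 * π * besselI 0 (2 * K * r)) ^ 2) ∧
    (∃ C : ℝ, 0 < C ∧ ∀ p : ℕ, 1 ≤ p →
      |∫ θ in (0:ℝ)..(2 * π), Real.cos (2 * p * θ) / q K r θ|
        ≤ C / Real.sqrt (Nat.factorial (2 * p) : ℝ)) ∧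
    (∃ ρ : ℕ → ℝ,
      (∀ n : ℕ, ∃ Cn : ℝ, 0 < Cn ∧ ∀ p : ℕ, 1 ≤ p → |ρ p| ≤ Cn / (p : ℝ) ^ n) ∧
      ∀ p : ℕ, 1 ≤ p →
        Real.sqrt (∫ θ in (0:ℝ)..(2 * π), (Real.sin (p * θ) / p) ^ 2 / q K r θ)
          = (Real.sqrt 2 * π * besselI 0 (2 * K * r)) / p * (1 + ρ p)) := by
  obtain ⟨C, hC, hcos⟩ := exists_abs_integral_cos_nat_mul_div_q_le K r
  have hcos_even : ∀ p : ℕ, |∫ θ in (0:ℝ)..2 * π, cos (2 * p * θ) / q K r θ|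
      ≤ C / √((2 * p)! : ℝ) := fun p ↦ by exact_mod_cast hcos (2 * p)
  set s := √2 * π * besselI 0 (2 * K * r)
  have hs : 0 < s := by have := besselI_zero_pos (2 * K * r); positivity
  have hs_sq : s ^ 2 = (2 * π * besselI 0 (2 * K * r)) ^ 2 / 2 := by
    rw [mul_pow, mul_pow, sq_sqrt zero_le_two]; ring
  obtain ⟨ρ, hρ, hsqrt⟩ := exists_sqrt_eq_mul_one_add_of_abs_sub_sq_le (s := s) (C := C / 2) hs
    (by positivity) (fun p _ ↦ integral_one_sub_cos_div_two_q_nonneg K r (2 * p)) fun p _ ↦ by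
      rw [integral_one_sub_cos_div_two_q, hs_sq, ← sub_div, sub_sub_cancel_left, abs_div,
        abs_neg, abs_two, div_right_comm]
      exact div_le_div_of_nonneg_right (hcos_even p) zero_le_two
  refine ⟨fun p _ ↦ integral_sin_nat_mul_div_q K r p, fun p _ ↦ integral_sin_div_sq_div _ p,
    integral_one_div_q K r, ⟨C, hC, fun p _ ↦ hcos_even p⟩, ρ, hρ, fun p hp ↦ ?_⟩
  rw [integral_sin_div_sq_div, one_div_mul_eq_div, sqrt_div
    (integral_one_sub_cos_div_two_q_nonneg K r _), sqrt_sq (Nat.cast_nonneg p), hsqrt p hp]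
  ring

/-- Weighted `H_{−1,1/q}` norm of `u_p = cos(p·)`: its centered primitive is
`sin(pθ)/p`, `‖u_p‖²_{−1,1/q} = (1/p²)∫ (1 − cos(2pθ))/(2q)`,
`∫ 1/q = (2π I₀(2Kr))²`, `∫ cos(2pθ)/q = O(1/√((2p)!))`, and hence
`‖u_p‖_{−1,1/q} = (√2 π I₀(2Kr)/p)(1 + ρ_p)` with `ρ_p` decaying faster than any
power of `1/p`. -/
theorem cos_weighted_Hminus1_norm (K r : ℝ) (hK : 1 < K) (hr : 0 < r)
    (hfix : r = besselI 1 (2 * K * r) / besselI 0 (2 * K * r)) :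
    (∀ p : ℕ, 1 ≤ p → (∫ θ in (0:ℝ)..(2 * π), Real.sin (p * θ) / q K r θ) = 0) ∧
    (∀ p : ℕ, 1 ≤ p →
      (∫ θ in (0:ℝ)..(2 * π), (Real.sin (p * θ) / p) ^ 2 / q K r θ)
        = (1 / (p : ℝ) ^ 2)
            * ∫ θ in (0:ℝ)..(2 * π), (1 - Real.cos (2 * p * θ)) / (2 * q K r θ)) ∧
    ((∫ θ in (0:ℝ)..(2 * π), 1 / q K r θ) = (2 * π * besselI 0 (2 * K * r)) ^ 2) ∧
    (∃ C : ℝ, 0 < C ∧ ∀ p : ℕ, 1 ≤ p →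
      |∫ θ in (0:ℝ)..(2 * π), Real.cos (2 * p * θ) / q K r θ|
        ≤ C / Real.sqrt (Nat.factorial (2 * p) : ℝ)) ∧
    (∃ ρ : ℕ → ℝ,
      (∀ n : ℕ, ∃ Cn : ℝ, 0 < Cn ∧ ∀ p : ℕ, 1 ≤ p → |ρ p| ≤ Cn / (p : ℝ) ^ n) ∧
      ∀ p : ℕ, 1 ≤ p →
        Real.sqrt (∫ θ in (0:ℝ)..(2 * π), (Real.sin (p * θ) / p) ^ 2 / q K r θ)
          = (Real.sqrt 2 * π * besselI 0 (2 * K * r)) / p * (1 + ρ p)) :=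
  cos_weighted_Hminus1_norm_general K r
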